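/- For a vector field φ = (φ_1,...,φ_d) ∈ C^1 and V ∈ C^1 on a domain Ω ⊂ R^d, one has div(ψ V)-type expansion applied componentwise: the limit lim_{t→0} (1/t)(det(I + t DV)·(φ ∘ T_t) − φ) = (div(φ_1 V), ..., div(φ_d V))^⊤ in L^2(Ω)^d, where T_t = id + tV. -/

import Mathlib

open Matrix Filter MeasureTheory Topology

/-- Jacobian matrix of `V` at `x`: `(DV)_{i j} = ∂_j V_i`. -/
noncomputable def jacobianMatrix (d : ℕ) (V : (Fin d → ℝ) → (Fin d → ℝ)) (x : Fin d → ℝ) :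
    Matrix (Fin d) (Fin d) ℝ :=
  Matrix.of fun i j => fderiv ℝ (fun y => V y i) x (Pi.single j 1)

/-- Partial derivative `∂_i f` at `x`. -/
noncomputable def pd {d : ℕ} (i : Fin d) (f : (Fin d → ℝ) → ℝ) (x : Fin d → ℝ) : ℝ :=
  fderiv ℝ f x (Pi.single i 1)

/-! Write `P t x = det (I + t DV(x)) • φ (x + t V(x))`. The quotient in the statement is the slope
`(P t x - P 0 x) / t` minus `∂ₜ P (0, x)`: differentiating at `t = 0` gives `tr (DV) φ + Dφ V`,
which is `div (φᵢ V)` componentwise. Since `P` is jointly `C¹`, the mean value theorem and the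
uniform continuity of `∂ₜ P` on compact sets make the slopes converge uniformly on `supp V`, and
off `supp V` both vanish. Uniform convergence on the finite-measure set `Ω` then gives
convergence in `L²`. -/

open scoped ENNReal

section SlopeConvergence

variable {G : Type*} [NormedAddCommGroup G] [NormedSpace ℝ G]

theorem norm_slope_sub_le_of_hasDerivAt {f f' : ℝ → G} {t C : ℝ} (ht : t ≠ 0)
    (hf : ∀ s ∈ Set.uIcc 0 t, HasDerivAt f (f' s) s)
    (hC : ∀ s ∈ Set.uIcc 0 t, ‖f' s - f' 0‖ ≤ C) :
    ‖slope f 0 t - f' 0‖ ≤ C := by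
  have hg : ∀ s ∈ Set.uIcc 0 t, HasDerivWithinAt (fun r => f r - r • f' 0) (f' s - f' 0)
      (Set.uIcc 0 t) s := fun s hs => by
    simpa using ((hf s hs).fun_sub ((hasDerivAt_id s).smul_const (f' 0))).hasDerivWithinAt
  have hmvt : ‖(f t - t • f' 0) - f 0‖ ≤ C * |t| := by
    simpa using (convex_uIcc 0 t).norm_image_sub_le_of_norm_hasDerivWithin_le hg hC
      Set.left_mem_uIcc Set.right_mem_uIcc
  have hslope : slope f 0 t - f' 0 = t⁻¹ • ((f t - t • f' 0) - f 0) := by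
    rw [slope_def_module, sub_zero, smul_sub, smul_sub, smul_sub, smul_smul, inv_mul_cancel₀ ht,
      one_smul]
    abel
  rw [hslope, norm_smul, norm_inv, Real.norm_eq_abs, inv_mul_le_iff₀ (abs_pos.2 ht), mul_comm]
  exact hmvt

variable {X : Type*} [TopologicalSpace X]

theorem tendstoUniformly_slope_of_continuous_deriv {F F' : ℝ → X → G} {K : Set X}
    (hK : IsCompact K) (hF' : Continuous (Function.uncurry F'))
    (hF : ∀ t x, HasDerivAt (F · x) (F' t x) t)
    (hFK : ∀ t, ∀ x ∉ K, F t x = F 0 x) :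
    TendstoUniformly (fun t x => slope (F · x) 0 t) (F' 0) (𝓝[≠] 0) := by
  rw [Metric.tendstoUniformly_iff]
  intro ε hε
  obtain ⟨v, hv, hvK⟩ := hK.mem_uniformity_of_prod hF'.continuousOn (Set.mem_univ 0)
    (Metric.dist_mem_uniformity (half_pos hε))
  rw [nhdsWithin_univ] at hv
  obtain ⟨δ, hδ, hδv⟩ := Metric.mem_nhds_iff.1 hv
  have hF'K : ∀ s, ∀ x ∉ K, F' s x = 0 := fun s x hx =>
    (hF s x).unique ((hasDerivAt_const s (F 0 x)).congr_of_eventuallyEq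
      (Eventually.of_forall fun r => hFK r x hx))
  filter_upwards [self_mem_nhdsWithin, nhdsWithin_le_nhds (Metric.ball_mem_nhds 0 hδ)]
    with t ht htδ x
  have hsub : Set.uIcc 0 t ⊆ Metric.ball 0 δ :=
    (convex_ball 0 δ).ordConnected.uIcc_subset (Metric.mem_ball_self hδ) htδ
  have hbound : ∀ s ∈ Set.uIcc 0 t, ‖F' s x - F' 0 x‖ ≤ ε / 2 := by
    intro s hs
    by_cases hx : x ∈ K
    · rw [← dist_eq_norm]
      exact (hvK s (hδv (hsub hs)) x hx).le
    · simpa [hF'K _ x hx] using (half_pos hε).le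
  rw [dist_comm, dist_eq_norm]
  exact (norm_slope_sub_le_of_hasDerivAt ht (fun s _ => hF s x) hbound).trans_lt
    (half_lt_self hε)

theorem DifferentiableAt.hasDerivAt_uncurry_left {E : Type*} [NormedAddCommGroup E]
    [NormedSpace ℝ E] {F : ℝ → E → G} {t : ℝ} {x : E}
    (hF : DifferentiableAt ℝ (Function.uncurry F) (t, x)) :
    HasDerivAt (F · x) (fderiv ℝ (Function.uncurry F) (t, x) (1, 0)) t := by
  have h := hF.hasFDerivAt.comp_hasDerivAt t ((hasDerivAt_id t).prodMk (hasDerivAt_const t x))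
  exact h

end SlopeConvergence

theorem tendsto_eLpNorm_sub_of_tendstoUniformly {α ι E : Type*} [MeasurableSpace α]
    [NormedAddCommGroup E] {μ : Measure α} [IsFiniteMeasure μ] {p : ℝ≥0∞} {l : Filter ι}
    {F : ι → α → E} {f : α → E} (h : TendstoUniformly F f l) :
    Tendsto (fun i => eLpNorm (fun x => F i x - f x) p μ) l (𝓝 0) := by
  set C := μ Set.univ ^ p.toReal⁻¹
  have hC : C ≠ ∞ := ENNReal.rpow_ne_top_of_nonneg (by positivity) (measure_ne_top μ _)
  have hbound : Tendsto (fun δ : ℝ => C * ENNReal.ofReal δ) (𝓝[>] 0) (𝓝 0) := by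
    simpa using (ENNReal.Tendsto.const_mul (ENNReal.tendsto_ofReal
      (tendsto_id (x := 𝓝 (0 : ℝ)))) (Or.inr hC)).mono_left nhdsWithin_le_nhds
  rw [ENNReal.tendsto_nhds_zero]
  intro ε hε
  obtain ⟨δ, hδε, hδ⟩ := ((hbound.eventually (ge_mem_nhds hε)).and self_mem_nhdsWithin).exists
  filter_upwards [Metric.tendstoUniformly_iff.1 h δ hδ] with i hi
  refine (eLpNorm_le_of_ae_bound (ae_of_all _ fun x => ?_)).trans hδε
  rw [← dist_eq_norm, dist_comm]
  exact (hi x).le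

theorem contDiff_det_of_entries {E ι : Type*} [NormedAddCommGroup E] [NormedSpace ℝ E]
    [Fintype ι] [DecidableEq ι] {k : WithTop ℕ∞} {A : E → Matrix ι ι ℝ}
    (hA : ∀ i j, ContDiff ℝ k fun x => A x i j) : ContDiff ℝ k fun x => (A x).det := by
  simp only [det_apply, Units.smul_def, zsmul_eq_mul]
  exact ContDiff.sum fun σ _ => contDiff_const.mul (contDiff_prod fun i _ => hA (σ i) i)

theorem hasDerivAt_det_one_add_smul {𝕜 ι : Type*} [NontriviallyNormedField 𝕜] [Fintype ι]
    [DecidableEq ι] (M : Matrix ι ι 𝕜) :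
    HasDerivAt (fun s : 𝕜 => (1 + s • M).det) M.trace 0 := by
  have h := (Polynomial.hasDerivAt (det (1 + (Polynomial.X : Polynomial 𝕜) • M.map Polynomial.C)) 0)
  rw [derivative_det_one_add_X_smul] at h
  convert h using 2 with s
  rw [← Polynomial.coe_evalRingHom, RingHom.map_det]
  congr 1
  ext i j
  by_cases hij : i = j <;> simp [RingHom.mapMatrix_apply, one_apply, hij] <;> ring

/-- The pullback of `φ`, as a density, under `T_t = id + tV`. -/
noncomputable def densityPullback (d : ℕ) (φ V : (Fin d → ℝ) → (Fin d → ℝ)) (t : ℝ)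
    (x : Fin d → ℝ) : Fin d → ℝ :=
  ((1 : Matrix (Fin d) (Fin d) ℝ) + t • jacobianMatrix d V x).det • φ (x + t • V x)

section DensityPullback

variable {d : ℕ} {φ V : (Fin d → ℝ) → (Fin d → ℝ)}

theorem contDiff_uncurry_densityPullback (hφ : ContDiff ℝ 1 φ) (hV : ContDiff ℝ 2 V) :
    ContDiff ℝ 1 (Function.uncurry (densityPullback d φ V)) := by
  have hJ : ∀ i j, ContDiff ℝ 1 fun x => jacobianMatrix d V x i j := fun i j =>
    ((contDiff_pi.1 hV i).fderiv_right (by norm_num)).clm_apply contDiff_const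
  have hdet : ContDiff ℝ 1 fun p : ℝ × (Fin d → ℝ) =>
      ((1 : Matrix (Fin d) (Fin d) ℝ) + p.1 • jacobianMatrix d V p.2).det :=
    contDiff_det_of_entries (A := fun p : ℝ × (Fin d → ℝ) => 1 + p.1 • jacobianMatrix d V p.2)
      fun i j => by
      simp only [Matrix.add_apply, Matrix.smul_apply, smul_eq_mul]
      exact contDiff_const.add (contDiff_fst.mul ((hJ i j).comp contDiff_snd))
  exact hdet.smul (hφ.comp (contDiff_snd.add (contDiff_fst.smul
    ((hV.of_le (by norm_num)).comp contDiff_snd))))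

theorem densityPullback_zero (x : Fin d → ℝ) : densityPullback d φ V 0 x = φ x := by
  simp [densityPullback]

theorem densityPullback_of_notMem_tsupport {x : Fin d → ℝ} (hx : x ∉ tsupport V) (t : ℝ) :
    densityPullback d φ V t x = φ x := by
  have hJ : jacobianMatrix d V x = 0 := by
    ext i j
    have hxi : x ∉ tsupport fun y => V y i := fun h =>
      hx (tsupport_comp_subset (g := fun v : Fin d → ℝ => v i) rfl V h)
    simp [jacobianMatrix, fderiv_of_notMem_tsupport ℝ hxi]
  simp [densityPullback, hJ, image_eq_zero_of_notMem_tsupport hx]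

theorem pd_mul {f g : (Fin d → ℝ) → ℝ} {x : Fin d → ℝ} (hf : DifferentiableAt ℝ f x)
    (hg : DifferentiableAt ℝ g x) (j : Fin d) :
    pd j (fun y => f y * g y) x = f x * pd j g x + g x * pd j f x := by
  simp [pd, fderiv_fun_mul hf hg]

theorem hasDerivAt_densityPullback_zero (hφ : Differentiable ℝ φ) (hV : Differentiable ℝ V)
    (x : Fin d → ℝ) :
    HasDerivAt (densityPullback d φ V · x) (fun i => ∑ j, pd j (fun y => φ y i * V y j) x) 0 := by
  rw [hasDerivAt_pi]
  intro i
  have hφi : Differentiable ℝ fun y => φ y i := differentiable_pi.1 hφ i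
  have hshift : HasDerivAt (fun s : ℝ => φ (x + s • V x) i)
      (fderiv ℝ (fun y => φ y i) x (V x)) 0 := by
    have hline : HasDerivAt (fun s : ℝ => x + s • V x) (V x) 0 := by
      simpa using ((hasDerivAt_id (0 : ℝ)).smul_const (V x)).const_add x
    exact (hφi x).hasFDerivAt.comp_hasDerivAt_of_eq 0 hline (by simp)
  refine HasDerivAt.congr_deriv (f := fun s => densityPullback d φ V s x i)
    ((hasDerivAt_det_one_add_smul (jacobianMatrix d V x)).fun_mul hshift) ?_
  have hdir : fderiv ℝ (fun y => φ y i) x (V x) = ∑ j, V x j * pd j (fun y => φ y i) x := by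
    conv_lhs => rw [pi_eq_sum_univ' (V x), map_sum]
    simp [pd]
  simp only [pd_mul (hφi x) (differentiable_pi.1 hV _ x), Finset.sum_add_distrib, ← Finset.mul_sum,
    hdir, zero_smul, add_zero, det_one, one_mul]
  simp [trace, jacobianMatrix, pd, mul_comm]

end DensityPullback

theorem stmt4_general (d : ℕ) (Ω : Set (Fin d → ℝ))
    (hΩb : Bornology.IsBounded Ω)
    (φ V : (Fin d → ℝ) → (Fin d → ℝ))
    (hφ : ContDiff ℝ 2 φ)
    (hV : ContDiff ℝ 2 V) (hVsupp : HasCompactSupport V) :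
    Tendsto
      (fun t : ℝ =>
        eLpNorm
          (fun x =>
            t⁻¹ • ((((1 : Matrix (Fin d) (Fin d) ℝ) + t • jacobianMatrix d V x).det •
                φ (x + t • V x)) - φ x)
              - fun i => ∑ j, pd j (fun y => φ y i * V y j) x)
          2 (volume.restrict Ω))
      (𝓝[≠] 0) (𝓝 0) := by
  have : IsFiniteMeasure (volume.restrict Ω) := isFiniteMeasure_restrict.2 hΩb.measure_lt_top.ne
  have hP : ContDiff ℝ 1 (Function.uncurry (densityPullback d φ V)) :=
    contDiff_uncurry_densityPullback (hφ.of_le (by norm_num)) hV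
  have hPt : ∀ t x, HasDerivAt (densityPullback d φ V · x)
      (fderiv ℝ (Function.uncurry (densityPullback d φ V)) (t, x) (1, 0)) t := fun t x =>
    (hP.differentiable one_ne_zero (t, x)).hasDerivAt_uncurry_left
  have hdiv : ∀ x, fderiv ℝ (Function.uncurry (densityPullback d φ V)) (0, x) (1, 0) =
      fun i => ∑ j, pd j (fun y => φ y i * V y j) x := fun x =>
    (hPt 0 x).unique (hasDerivAt_densityPullback_zero (hφ.differentiable (by norm_num))
      (hV.differentiable (by norm_num)) x)
  have hunif := tendstoUniformly_slope_of_continuous_deriv hVsupp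
    ((hP.continuous_fderiv one_ne_zero).clm_apply continuous_const) hPt
    fun t x hx => by
      rw [densityPullback_of_notMem_tsupport hx, densityPullback_of_notMem_tsupport hx]
  refine (tendsto_eLpNorm_sub_of_tendstoUniformly (μ := volume.restrict Ω) (p := 2) hunif).congr
    fun t => ?_
  congr 1
  ext x : 1
  rw [slope_def_module, sub_zero, densityPullback_zero, hdiv]
  rfl

/-- With `T_t = id + tV`, one has
`lim_{t→0} (1/t)(det(I + t DV)·(φ ∘ T_t) − φ) = (div(φ_1 V), …, div(φ_d V))^⊤` in `L²(Ω)^d`. -/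
theorem stmt4 (d : ℕ) (Ω : Set (Fin d → ℝ)) (hΩ : IsOpen Ω)
    (hΩb : Bornology.IsBounded Ω) (hΩm : MeasurableSet Ω)
    (φ V : (Fin d → ℝ) → (Fin d → ℝ))
    (hφ : ContDiff ℝ 2 φ)
    (hV : ContDiff ℝ 2 V) (hVsupp : HasCompactSupport V) (hVΩ : tsupport V ⊆ Ω) :
    Tendsto
      (fun t : ℝ =>
        eLpNorm
          (fun x =>
            t⁻¹ • ((((1 : Matrix (Fin d) (Fin d) ℝ) + t • jacobianMatrix d V x).det •
                φ (x + t • V x)) - φ x)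
              - fun i => ∑ j, pd j (fun y => φ y i * V y j) x)
          2 (volume.restrict Ω))
      (𝓝[≠] 0) (𝓝 0) :=
  stmt4_general d Ω hΩb φ V hφ hV hVsupp
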